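/- arXiv:1906.04533 — 4 statements merged into one kernel-verified Lean document; each statement's English description precedes it below -/
import Mathlib

section
/- Let X, X', Y, Y' be finite subsets of the positive integers with X ∪ Y = X' ∪ Y' and X ∩ Y = X' ∩ Y', and let Z be a finite set of positive integers disjoint from X ∪ Y. Then Δ₁(X' ∪ Z)·Δ₁(Y' ∪ Z)·Δ₁(X)·Δ₁(Y) = Δ₁(X ∪ Z)·Δ₁(Y ∪ Z)·Δ₁(X')·Δ₁(Y'), where Δ₁(S) = ∏_{s,s' ∈ S, s < s'} (s' - s). -/
/-!
For `A` disjoint from `Z`, `Δ₁(A ∪ Z) = Δ₁(A) Δ₁(Z) ∏_{a ∈ A, z ∈ Z} |a - z|`, and the cross factor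
is a product over `A` of a function of `a`. Such products only see the multiset `X + Y`, which
the shuffling preserves since it preserves `X ∪ Y` and `X ∩ Y`; so the cross factors on both
sides agree and the identity reduces to a rearrangement of the remaining factors.
-/

open Finset

/-- `Δ₁(S) = ∏_{s,s' ∈ S, s < s'} (s' - s)` for a finite set of naturals. -/
def Delta1 (S : Finset ℕ) : ℕ :=
  ∏ s ∈ S, ∏ t ∈ S.filter (fun t => s < t), (t - s)

lemma Finset.prod_mul_prod_eq_of_union_eq_of_inter_eq {α β : Type*} [DecidableEq α]
    [CommMonoid β] {X Y X' Y' : Finset α} (f : α → β) (hU : X ∪ Y = X' ∪ Y')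
    (hI : X ∩ Y = X' ∩ Y') :
    (∏ a ∈ X', f a) * ∏ a ∈ Y', f a = (∏ a ∈ X, f a) * ∏ a ∈ Y, f a := by
  rw [← prod_union_inter, ← hU, ← hI, prod_union_inter]

lemma Delta1_union_of_disjoint {A Z : Finset ℕ} (h : Disjoint A Z) :
    Delta1 (A ∪ Z) = Delta1 A * Delta1 Z * ∏ a ∈ A, ∏ z ∈ Z, a.dist z := by
  -- A pair `a ≠ z` contributes to exactly one of the two mixed products.
  have hcross : ∀ a ∈ A, ∀ z ∈ Z,
      (if a < z then z - a else 1) * (if z < a then a - z else 1) = a.dist z := by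
    intro a ha z hz
    have : a ≠ z := ne_of_mem_of_not_mem ha (disjoint_right.mp h hz)
    unfold Nat.dist
    split_ifs <;> omega
  simp only [Delta1, filter_union, prod_union h, prod_union (disjoint_filter_filter h),
    prod_mul_distrib]
  rw [← prod_congr rfl fun a ha => prod_congr rfl (hcross a ha)]
  simp only [prod_mul_distrib, prod_filter, prod_comm (s := Z) (t := A)]
  ring

theorem delta1_shuffle_general (X X' Y Y' Z : Finset ℕ)
    (hU : X ∪ Y = X' ∪ Y') (hI : X ∩ Y = X' ∩ Y')
    (hZ : Disjoint Z (X ∪ Y)) :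
    Delta1 (X' ∪ Z) * Delta1 (Y' ∪ Z) * (Delta1 X * Delta1 Y)
      = Delta1 (X ∪ Z) * Delta1 (Y ∪ Z) * (Delta1 X' * Delta1 Y') := by
  obtain ⟨hX, hY⟩ := disjoint_union_left.mp hZ.symm
  obtain ⟨hX', hY'⟩ := disjoint_union_left.mp (hU ▸ hZ.symm)
  have hcross := prod_mul_prod_eq_of_union_eq_of_inter_eq (fun a => ∏ z ∈ Z, a.dist z) hU hI
  rw [Delta1_union_of_disjoint hX, Delta1_union_of_disjoint hY, Delta1_union_of_disjoint hX',
    Delta1_union_of_disjoint hY']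
  linear_combination (Delta1 X * Delta1 Y * Delta1 X' * Delta1 Y' * Delta1 Z ^ 2) * hcross

/-- Shuffling invariance of the product `Δ₁(X∪Z)·Δ₁(Y∪Z)` (cross-multiplied form of
`Δ₁(X'∪Z)Δ₁(Y'∪Z)/Δ₁(X∪Z)Δ₁(Y∪Z) = Δ₁(X')Δ₁(Y')/Δ₁(X)Δ₁(Y)`). -/
theorem delta1_shuffle (X X' Y Y' Z : Finset ℕ)
    (hpos : ∀ s ∈ X ∪ Y ∪ Z, 0 < s)
    (hU : X ∪ Y = X' ∪ Y') (hI : X ∩ Y = X' ∩ Y')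
    (hZ : Disjoint Z (X ∪ Y)) :
    Delta1 (X' ∪ Z) * Delta1 (Y' ∪ Z) * (Delta1 X * Delta1 Y)
      = Delta1 (X ∪ Z) * Delta1 (Y ∪ Z) * (Delta1 X' * Delta1 Y') :=
  delta1_shuffle_general X X' Y Y' Z hU hI hZ
end

section
/- Let k be a positive integer, and let X, X' ⊆ [k] be such that X ∪ X_{(k)} = X' ∪ X'_{(k)} and X ∩ X_{(k)} = X' ∩ X'_{(k)}. Let Z ⊆ [k] be disjoint from X ∪ X_{(k)} and satisfy Z = Z_{(k)}. Then Δ₂(X, Z) = Δ₂(X', Z), where Δ₂(S,T) = ∏_{s∈S,t∈T}|t−s|. -/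
/-!
Reflection `x ↦ k + 1 - x` preserves distances and fixes `Z`, so `Δ₂(X_{(k)}, Z) = Δ₂(X, Z)`.
Multiplicativity of `Δ₂` in its first argument then gives
`Δ₂(X, Z)² = Δ₂(X ∪ X_{(k)}, Z) · Δ₂(X ∩ X_{(k)}, Z)`, which depends only on the union and
the intersection.
-/

open Finset

/-- `Δ₂(S,T) = ∏_{s ∈ S, t ∈ T} |t - s|`. -/
def Delta2 (S T : Finset ℕ) : ℕ :=
  ∏ s ∈ S, ∏ t ∈ T, (max s t - min s t)

/-- The k-reflection `S_{(k)} = {k+1-s : s ∈ S}` of `S ⊆ [k]`. -/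
def kReflect (k : ℕ) (S : Finset ℕ) : Finset ℕ :=
  S.image (fun s => k + 1 - s)

lemma Delta2_union_mul_inter (S S' T : Finset ℕ) :
    Delta2 (S ∪ S') T * Delta2 (S ∩ S') T = Delta2 S T * Delta2 S' T :=
  prod_union_inter

lemma prod_kReflect {M : Type*} [CommMonoid M] {k : ℕ} {Y : Finset ℕ}
    (hY : ∀ y ∈ Y, y ≤ k + 1) (g : ℕ → M) :
    ∏ y ∈ kReflect k Y, g y = ∏ y ∈ Y, g (k + 1 - y) :=
  prod_image fun a ha b hb _ => by have := hY a ha; have := hY b hb; omega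

lemma Delta2_kReflect_left {k : ℕ} {Y T : Finset ℕ} (hY : ∀ y ∈ Y, y ≤ k + 1)
    (hT : ∀ t ∈ T, t ≤ k + 1) (hTsym : kReflect k T = T) :
    Delta2 (kReflect k Y) T = Delta2 Y T :=
  calc Delta2 (kReflect k Y) T
      = ∏ y ∈ Y, ∏ t ∈ kReflect k T, (max (k + 1 - y) t - min (k + 1 - y) t) := by
        rw [Delta2, prod_kReflect hY, hTsym]
    _ = ∏ y ∈ Y, ∏ t ∈ T, (max (k + 1 - y) (k + 1 - t) - min (k + 1 - y) (k + 1 - t)) := by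
        simp_rw [prod_kReflect hT]
    _ = Delta2 Y T :=
        prod_congr rfl fun y hy => prod_congr rfl fun t ht => by
          have := hY y hy; have := hT t ht; omega

theorem delta2_symmetric_shuffle_general (k : ℕ) (X X' Z : Finset ℕ)
    (hX : X ⊆ Finset.Icc 1 k) (hX' : X' ⊆ Finset.Icc 1 k) (hZk : Z ⊆ Finset.Icc 1 k)
    (hU : X ∪ kReflect k X = X' ∪ kReflect k X')
    (hI : X ∩ kReflect k X = X' ∩ kReflect k X')
    (hZsym : kReflect k Z = Z) :
    Delta2 X Z = Delta2 X' Z := by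
  have le_succ_of_subset_Icc {Y : Finset ℕ} (hY : Y ⊆ Icc 1 k) : ∀ y ∈ Y, y ≤ k + 1 :=
    fun y hy => (mem_Icc.1 (hY hy)).2.trans k.le_succ
  have hsq : Delta2 X Z * Delta2 X Z = Delta2 X' Z * Delta2 X' Z := by
    have h := Delta2_union_mul_inter X (kReflect k X) Z
    rwa [hU, hI, Delta2_union_mul_inter,
      Delta2_kReflect_left (le_succ_of_subset_Icc hX) (le_succ_of_subset_Icc hZk) hZsym,
      Delta2_kReflect_left (le_succ_of_subset_Icc hX') (le_succ_of_subset_Icc hZk) hZsym, eq_comm] at h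
  exact Nat.mul_self_inj.mp hsq

/-- If `(X', X'_{(k)})` is a shuffling of `(X, X_{(k)})` and `Z ⊆ [k]` is
k-symmetric and disjoint from `X ∪ X_{(k)}`, then `Δ₂(X,Z) = Δ₂(X',Z)`. -/
theorem delta2_symmetric_shuffle (k : ℕ) (hk : 0 < k) (X X' Z : Finset ℕ)
    (hX : X ⊆ Finset.Icc 1 k) (hX' : X' ⊆ Finset.Icc 1 k) (hZk : Z ⊆ Finset.Icc 1 k)
    (hU : X ∪ kReflect k X = X' ∪ kReflect k X')
    (hI : X ∩ kReflect k X = X' ∩ kReflect k X')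
    (hZ : Disjoint Z (X ∪ kReflect k X))
    (hZsym : kReflect k Z = Z) :
    Delta2 X Z = Delta2 X' Z :=
  delta2_symmetric_shuffle_general k X X' Z hX hX' hZk hU hI hZsym
end

section
/- Let a+b = a'+b', b+c = b'+c', and X, Y ⊆ [a+b], X', Y' ⊆ [a'+b'] with X ∪ Y = X' ∪ Y', X ∩ Y = X' ∩ Y', and b−|X| = b'−|X'| ≥ 0. Then the ratio of the sums ( Σ_Z Δ₁(X'∪Z)·Δ₁(Y'∪Z) ) / ( Σ_Z Δ₁(X∪Z)·Δ₁(Y∪Z) ), where Z ranges over all (b−|X|)-element subsets of [a+b]∖(X∪Y), equals (Δ₁(X')·Δ₁(Y'))/(Δ₁(X)·Δ₁(Y)), assuming there is at least one such Z. -/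
/-!
For `S` disjoint from `Z`, `Δ₁(S ∪ Z) = Δ₁(S) Δ₁(Z) ∏_{s ∈ S, z ∈ Z} |s - z|`. The cross factor is a
product over `s ∈ S`, so for `X`, `Y` disjoint from `Z` the product of the cross factors of `X` and
`Y` depends only on `X ∪ Y` and `X ∩ Y`. Hence `Δ₁(X' ∪ Z) Δ₁(Y' ∪ Z) Δ₁(X) Δ₁(Y)` and
`Δ₁(X ∪ Z) Δ₁(Y ∪ Z) Δ₁(X') Δ₁(Y')` agree for every single `Z`, not only after summing.
-/

open Finset

lemma prod_dist_eq_prod_filter_lt_mul {s : ℕ} {Z : Finset ℕ} (hs : s ∉ Z) :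
    ∏ z ∈ Z, Nat.dist s z = (∏ z ∈ Z with s < z, (z - s)) * ∏ z ∈ Z with z < s, (s - z) := by
  have hfilter : Z.filter (¬ s < ·) = Z.filter (· < s) := filter_congr fun z hz => by
    have : z ≠ s := fun e => hs (e ▸ hz)
    omega
  rw [← prod_filter_mul_prod_filter_not Z (s < ·), hfilter]
  congr 1 <;> refine prod_congr rfl fun z hz => ?_ <;> rw [mem_filter] at hz <;>
    simp only [Nat.dist] <;> omega

lemma delta1_union_of_disjoint {S Z : Finset ℕ} (h : Disjoint S Z) :
    Delta1 (S ∪ Z) = Delta1 S * Delta1 Z * ∏ s ∈ S, ∏ z ∈ Z, Nat.dist s z := by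
  have hsplit : ∀ s, ∏ t ∈ (S ∪ Z).filter (s < ·), (t - s)
      = (∏ t ∈ S with s < t, (t - s)) * ∏ t ∈ Z with s < t, (t - s) := fun s => by
    rw [filter_union, prod_union (h.mono (filter_subset _ _) (filter_subset _ _))]
  have hswap : ∏ z ∈ Z, ∏ s ∈ S with z < s, (s - z) = ∏ s ∈ S, ∏ z ∈ Z with z < s, (s - z) :=
    prod_comm' fun z s => by simp only [mem_filter]; tauto
  have hcross : ∏ s ∈ S, ∏ z ∈ Z, Nat.dist s z
      = (∏ s ∈ S, ∏ z ∈ Z with s < z, (z - s)) * ∏ s ∈ S, ∏ z ∈ Z with z < s, (s - z) := by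
    rw [← prod_mul_distrib]
    exact prod_congr rfl fun s hs => prod_dist_eq_prod_filter_lt_mul (disjoint_left.mp h hs)
  unfold Delta1
  simp only [prod_union h, hsplit, prod_mul_distrib, hswap, hcross]
  ring

lemma delta1_union_mul_delta1_union {X Y Z : Finset ℕ} (hX : Disjoint X Z) (hY : Disjoint Y Z) :
    Delta1 (X ∪ Z) * Delta1 (Y ∪ Z) = Delta1 X * Delta1 Y * Delta1 Z ^ 2 *
      ((∏ s ∈ X ∪ Y, ∏ z ∈ Z, Nat.dist s z) * ∏ s ∈ X ∩ Y, ∏ z ∈ Z, Nat.dist s z) := by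
  rw [delta1_union_of_disjoint hX, delta1_union_of_disjoint hY, prod_union_inter]
  ring

lemma delta1_union_mul_delta1_union_shuffle {X Y X' Y' Z : Finset ℕ}
    (hU : X ∪ Y = X' ∪ Y') (hI : X ∩ Y = X' ∩ Y') (hZ : Disjoint (X ∪ Y) Z) :
    Delta1 (X' ∪ Z) * Delta1 (Y' ∪ Z) * (Delta1 X * Delta1 Y)
      = Delta1 (X ∪ Z) * Delta1 (Y ∪ Z) * (Delta1 X' * Delta1 Y') := by
  have hZ' : Disjoint (X' ∪ Y') Z := hU ▸ hZ
  rw [delta1_union_mul_delta1_union (disjoint_union_left.mp hZ).1 (disjoint_union_left.mp hZ).2,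
    delta1_union_mul_delta1_union (disjoint_union_left.mp hZ').1 (disjoint_union_left.mp hZ').2,
    hU, hI]
  ring

theorem sum_delta1_shuffle_general (a b : ℕ) (X Y X' Y' : Finset ℕ)
    (hU : X ∪ Y = X' ∪ Y') (hI : X ∩ Y = X' ∩ Y') :
    (∑ Z ∈ (Finset.Icc 1 (a + b) \ (X ∪ Y)).powersetCard (b - X.card),
        Delta1 (X' ∪ Z) * Delta1 (Y' ∪ Z)) * (Delta1 X * Delta1 Y)
      = (∑ Z ∈ (Finset.Icc 1 (a + b) \ (X ∪ Y)).powersetCard (b - X.card),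
          Delta1 (X ∪ Z) * Delta1 (Y ∪ Z)) * (Delta1 X' * Delta1 Y') := by
  rw [sum_mul, sum_mul]
  refine sum_congr rfl fun Z hZ => delta1_union_mul_delta1_union_shuffle hU hI ?_
  exact disjoint_of_subset_right (mem_powersetCard.mp hZ).1 disjoint_sdiff

/-- Shuffling invariance of the ratio of sums
`(Σ_Z Δ₁(X'∪Z)Δ₁(Y'∪Z)) / (Σ_Z Δ₁(X∪Z)Δ₁(Y∪Z)) = Δ₁(X')Δ₁(Y')/(Δ₁(X)Δ₁(Y))`,
`Z` ranging over the `(b-|X|)`-element subsets of `[a+b] ∖ (X∪Y)`;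
stated in cross-multiplied form. -/
theorem sum_delta1_shuffle (a b c a' b' c' : ℕ) (X Y X' Y' : Finset ℕ)
    (hab : a + b = a' + b') (hbc : b + c = b' + c')
    (hXs : X ⊆ Finset.Icc 1 (a + b)) (hYs : Y ⊆ Finset.Icc 1 (a + b))
    (hXs' : X' ⊆ Finset.Icc 1 (a' + b')) (hYs' : Y' ⊆ Finset.Icc 1 (a' + b'))
    (hU : X ∪ Y = X' ∪ Y') (hI : X ∩ Y = X' ∩ Y')
    (hXb : X.card ≤ b) (hXb' : X'.card ≤ b')
    (hcard : b - X.card = b' - X'.card)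
    (hne : ((Finset.Icc 1 (a + b) \ (X ∪ Y)).powersetCard (b - X.card)).Nonempty) :
    (∑ Z ∈ (Finset.Icc 1 (a + b) \ (X ∪ Y)).powersetCard (b - X.card),
        Delta1 (X' ∪ Z) * Delta1 (Y' ∪ Z)) * (Delta1 X * Delta1 Y)
      = (∑ Z ∈ (Finset.Icc 1 (a + b) \ (X ∪ Y)).powersetCard (b - X.card),
          Delta1 (X ∪ Z) * Delta1 (Y ∪ Z)) * (Delta1 X' * Delta1 Y') :=
  sum_delta1_shuffle_general a b X Y X' Y' hU hI
end

section
/- For any set X = {x₁ < x₂ < ... < xₙ} ⊆ [m+n] of positive integers, Δ₁(X)/H(n) is a positive integer, where Δ₁(X) = ∏_{i<j}(x_j − x_i) and H(n) = ∏_{i=0}^{n−1} i!. -/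
/-!
Listing `X` increasingly as `x₀ < ⋯ < x_{n-1}`, `Δ₁(X)` is the Vandermonde determinant
`det (x_i ^ j)`. Dividing column `j` by `j!` turns it into `det (choose x_i j)`, an integer,
so `H(n) = ∏_{j<n} j!` divides it; positivity holds because every factor `x' - x` is positive.
-/

open Finset

/-- `H(n) = ∏_{i=0}^{n-1} i!`. -/
def Hfun (n : ℕ) : ℕ :=
  ∏ i ∈ Finset.range n, Nat.factorial i

lemma delta1_pos (S : Finset ℕ) : 0 < Delta1 S :=
  prod_pos fun _ _ => prod_pos fun _ ht => Nat.sub_pos_of_lt (mem_filter.mp ht).2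

lemma hfun_pos (n : ℕ) : 0 < Hfun n :=
  prod_pos fun i _ => Nat.factorial_pos i

lemma hfun_dvd_det_vandermonde {n : ℕ} (v : Fin n → ℤ) :
    (Hfun n : ℤ) ∣ (Matrix.vandermonde v).det := by
  cases n with
  | zero => simp [Hfun]
  | succ k =>
    rw [Hfun, Nat.prod_range_succ_factorial]
    exact Matrix.superFactorial_dvd_vandermonde_det v

lemma delta1_eq_det_vandermonde {n : ℕ} (S : Finset ℕ) (h : S.card = n) :
    (Delta1 S : ℤ) =
      (Matrix.vandermonde fun i : Fin n => ((S.orderEmbOfFin h i : ℕ) : ℤ)).det := by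
  set v := S.orderEmbOfFin h
  have hinj : Function.Injective fun i => (v i : ℕ) := v.injective
  have hS : S = univ.image fun i => (v i : ℕ) := by
    rw [← coe_inj, coe_image, coe_univ, Set.image_univ, range_orderEmbOfFin]
  have hfilter (i : Fin n) :
      S.filter (fun t => v i < t) = (Ioi i).image fun j => (v j : ℕ) := by
    ext t
    rw [hS]
    simp only [mem_filter, mem_image, mem_univ, true_and, mem_Ioi]
    constructor
    · rintro ⟨⟨j, rfl⟩, hlt⟩
      exact ⟨j, v.lt_iff_lt.mp hlt, rfl⟩
    · rintro ⟨j, hij, rfl⟩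
      exact ⟨⟨j, rfl⟩, v.strictMono hij⟩
  rw [Matrix.det_vandermonde, Delta1]
  conv_lhs => rw [hS]
  rw [prod_image fun _ _ _ _ hab => hinj hab]
  push_cast
  refine prod_congr rfl fun i _ => ?_
  rw [← hS, hfilter, prod_image fun _ _ _ _ hab => hinj hab]
  refine prod_congr rfl fun j hj => ?_
  rw [Nat.cast_sub (v.monotone (mem_Ioi.mp hj).le)]

lemma hfun_dvd_delta1 {n : ℕ} (S : Finset ℕ) (h : S.card = n) : Hfun n ∣ Delta1 S := by
  have hdvd := hfun_dvd_det_vandermonde fun i : Fin n => ((S.orderEmbOfFin h i : ℕ) : ℤ)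
  rw [← delta1_eq_det_vandermonde S h] at hdvd
  exact_mod_cast hdvd

theorem delta1_div_H_posint_general (n : ℕ) (X : Finset ℕ)
    (hcard : X.card = n) :
    Hfun n ∣ Delta1 X ∧ 0 < Delta1 X / Hfun n := by
  have hdvd := hfun_dvd_delta1 X hcard
  exact ⟨hdvd, Nat.div_pos (Nat.le_of_dvd (delta1_pos X) hdvd) (hfun_pos _)⟩

/-- Cohn–Larsen–Propp / Gelfand–Tsetlin: for an n-element `X ⊆ [m+n]`, the count
`M(T_{m,n}(X)) = Δ₁(X)/H(n)` is a positive integer: `H(n) ∣ Δ₁(X)` and the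
quotient is positive. -/
theorem delta1_div_H_posint (m n : ℕ) (X : Finset ℕ)
    (hX : X ⊆ Finset.Icc 1 (m + n)) (hcard : X.card = n) :
    Hfun n ∣ Delta1 X ∧ 0 < Delta1 X / Hfun n :=
  delta1_div_H_posint_general n X hcard
end
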